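/- Let 0 <= eps_1 < eps_2, let c > 1 be a constant such that ||exp(-itH) - (I - itH)||_2 <= c t^2 for all t in [0,1/2] and all Hermitian H with ||H||_infty <= 1 (where ||.||_2 is normalized Frobenius norm), and set alpha = (eps_2 - eps_1)/(3c). Let H be an n-qubit Hermitian matrix with ||H||_infty <= 1, and for an operator A with Pauli expansion A = sum_x a_x sigma_x let A_{>k} denote the part supported on Pauli strings of weight greater than k. If ||H_{>k}||_2 <= eps_1 then ||U(alpha)_{>k}||_2 <= (eps_2-eps_1)(2 eps_1 + eps_2)/(9c), whereas if ||H_{>k}||_2 >= eps_2 then ||U(alpha)_{>k}||_2 >= (eps_2-eps_1)(eps_1 + 2 eps_2)/(9c), where U(alpha) = exp(-i alpha H). -/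

import Mathlib

open Finset Matrix
open scoped Matrix.Norms.L2Operator

/-- `F n` is `𝔽₂^{2n}`, indexing the `n`-qubit Pauli operators. -/
abbrev F (n : ℕ) := (Fin n → ZMod 2) × (Fin n → ZMod 2)

/-- The `n`-qubit Pauli operator `σ_{(a,b)} = i^{a·b} X^{a₁}Z^{b₁} ⊗ ⋯ ⊗ X^{aₙ}Z^{bₙ}`. -/
noncomputable def pauli {n : ℕ} (x : F n) :
    Matrix (Fin n → ZMod 2) (Fin n → ZMod 2) ℂ := fun u v =>
  Complex.I ^ (∑ i, (x.1 i).val * (x.2 i).val) *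
    (-1 : ℂ) ^ (∑ i, (x.2 i).val * (v i).val) * (if u = v + x.1 then 1 else 0)

/-- The weight `|x|` of a Pauli string: the number of non-identity tensor factors. -/
def wt {n : ℕ} (x : F n) : ℕ :=
  (Finset.univ.filter (fun i => ¬(x.1 i = 0 ∧ x.2 i = 0))).card

/-- The Pauli coefficient `Â_x = 2^{-n} tr(σ_x† A)`. -/
noncomputable def pauliCoeff {n : ℕ}
    (A : Matrix (Fin n → ZMod 2) (Fin n → ZMod 2) ℂ) (x : F n) : ℂ :=
  (1 / (2 : ℂ) ^ n) * ((pauli x)ᴴ * A).trace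

/-- `A_{>k}`: the part of `A` supported on Pauli strings of weight greater than `k`. -/
noncomputable def projGt {n : ℕ} (k : ℕ)
    (A : Matrix (Fin n → ZMod 2) (Fin n → ZMod 2) ℂ) :
    Matrix (Fin n → ZMod 2) (Fin n → ZMod 2) ℂ :=
  ∑ x ∈ Finset.univ.filter (fun x : F n => k < wt x), pauliCoeff A x • pauli x

/-- The normalized Frobenius norm `‖A‖₂ = sqrt(tr(A†A)/2^n)`. -/
noncomputable def norm2 {n : ℕ}
    (A : Matrix (Fin n → ZMod 2) (Fin n → ZMod 2) ℂ) : ℝ :=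
  Real.sqrt (((Aᴴ * A).trace).re / 2 ^ n)

/-!
Write `U(t) = exp(-itH) = 1 - itH + R(t)`. By the functional calculus and the scalar bound
`|e^{ix} - 1 - ix| ≤ x²`, `‖R(t)‖₂ ≤ ‖R(t)‖_∞ ≤ t²` for every real `t`. The projection `A ↦ A_{>k}`
is linear, kills the identity, and is a contraction for `‖·‖₂` because the Pauli strings are
orthogonal for `(A, B) ↦ tr(A†B)`. Hence `‖U(α)_{>k}‖₂` lies within `α² ≤ cα²` of `α‖H_{>k}‖₂`,
and for `α = (ε₂ - ε₁)/(3c)` the numbers `αε₁ + cα²` and `αε₂ - cα²` are exactly the two bounds.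
-/

namespace Complex

lemma norm_exp_I_mul_ofReal_sub_one_sub_le (x : ℝ) :
    ‖exp (I * x) - 1 - I * x‖ ≤ x ^ 2 := by
  have hsin : x ^ 2 - x ^ 4 / 6 ≤ x * Real.sin x := by
    rcases lt_trichotomy x 0 with hx | rfl | hx
    · have := Real.sin_gt_sub_cube (neg_pos.2 hx)
      rw [Real.sin_neg] at this
      nlinarith
    · simp
    · nlinarith [Real.sin_gt_sub_cube hx]
  have hcos := Real.one_sub_sq_div_two_le_cos (x := x)
  have hpyth := Real.sin_sq_add_cos_sq x
  have hre : (exp (I * x) - 1 - I * x).re = Real.cos x - 1 := by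
    simp [mul_comm I, exp_mul_I, ← ofReal_cos, ← ofReal_sin]
  have him : (exp (I * x) - 1 - I * x).im = Real.sin x - x := by
    simp [mul_comm I, exp_mul_I, ← ofReal_cos, ← ofReal_sin]
  -- `|e^{ix} - 1 - ix|² = 2 - 2 cos x - 2 x sin x + x² ≤ x⁴ / 3`
  rw [← sq_le_sq₀ (norm_nonneg _) (sq_nonneg x), Complex.sq_norm, normSq_apply, hre, him]
  nlinarith [sq_nonneg (x ^ 2)]

end Complex

open Complex in
lemma IsSelfAdjoint.norm_exp_sub_one_sub_le {A : Type*} [CStarAlgebra A] {a : A}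
    (ha : IsSelfAdjoint a) (hnorm : ‖a‖ ≤ 1) (t : ℝ) :
    ‖NormedSpace.exp ((-(I * t)) • a) - (1 - (I * t) • a)‖ ≤ t ^ 2 := by
  cases subsingleton_or_nontrivial A
  · simp [Subsingleton.elim _ (0 : A)]
    positivity
  have : IsStarNormal a := ha.isStarNormal
  have hsmul : IsStarNormal ((-(I * t)) • a) := by
    refine ⟨?_⟩
    rw [star_smul, ha.star_eq]
    exact ((Commute.refl a).smul_left _).smul_right _
  have hexp : NormedSpace.exp ((-(I * t)) • a) = cfc (fun z : ℂ => cexp (-(I * t) * z)) a := by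
    rw [← CFC.complex_exp_eq_normedSpace_exp, ← cfc_comp_smul (-(I * t)) cexp a]
    rfl
  have hrem : NormedSpace.exp ((-(I * t)) • a) - (1 - (I * t) • a)
      = cfc (fun z : ℂ => cexp (-(I * t) * z) - (1 - I * t * z)) a := by
    rw [hexp, cfc_sub _ _ a, cfc_sub _ _ a, cfc_const_one ℂ a, cfc_const_mul_id _ a]
  rw [hrem]
  refine norm_cfc_le (sq_nonneg t) fun z hz => ?_
  obtain ⟨x, rfl⟩ : ∃ x : ℝ, (x : ℂ) = z := ⟨z.re, (ha.mem_spectrum_eq_re hz).symm⟩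
  have hx : x ^ 2 ≤ 1 := by
    rw [sq_le_one_iff_abs_le_one]
    simpa using (spectrum.norm_le_norm_of_mem hz).trans hnorm
  calc ‖cexp (-(I * t) * x) - (1 - I * t * x)‖
      = ‖cexp (I * ↑(-(t * x))) - 1 - I * ↑(-(t * x))‖ := by push_cast; ring_nf
    _ ≤ (-(t * x)) ^ 2 := norm_exp_I_mul_ofReal_sub_one_sub_le _
    _ ≤ t ^ 2 := by
        rw [neg_sq, mul_pow]
        exact mul_le_of_le_one_right (sq_nonneg t) hx

namespace Matrix

variable {m n : Type*}

def toL2 : Matrix m n ℂ →ₗ[ℂ] EuclideanSpace ℂ (m × n) where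
  toFun A := WithLp.toLp 2 fun p => A p.1 p.2
  map_add' _ _ := rfl
  map_smul' _ _ := rfl

@[simp]
lemma toL2_apply (A : Matrix m n ℂ) (p : m × n) : toL2 A p = A p.1 p.2 := rfl

variable [Fintype m] [Fintype n]

lemma inner_toL2 (A B : Matrix m n ℂ) : inner ℂ (toL2 A) (toL2 B) = (Aᴴ * B).trace := by
  simp only [PiLp.inner_apply, toL2_apply, RCLike.inner_apply, Fintype.sum_prod_type, trace, diag,
    mul_apply, conjTranspose_apply]
  rw [Finset.sum_comm]
  simp [mul_comm]

lemma norm_toL2_sq (A : Matrix m n ℂ) : ‖toL2 A‖ ^ 2 = ((Aᴴ * A).trace).re := by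
  rw [← inner_toL2, inner_self_eq_norm_sq_to_K]
  norm_cast

lemma norm_toL2_sq_le_card_mul [DecidableEq n] (A : Matrix m n ℂ) :
    ‖toL2 A‖ ^ 2 ≤ Fintype.card n * ‖A‖ ^ 2 := by
  have hcol : ∀ j, ∑ i, ‖A i j‖ ^ 2 ≤ ‖A‖ ^ 2 := fun j => by
    have h := l2_opNorm_mulVec A (EuclideanSpace.single j 1)
    rw [PiLp.norm_single, norm_one, mul_one] at h
    have h2 := pow_le_pow_left₀ (norm_nonneg _) h 2
    simpa [EuclideanSpace.norm_sq_eq, mulVec_single_one] using h2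
  calc ‖toL2 A‖ ^ 2 = ∑ j, ∑ i, ‖A i j‖ ^ 2 := by
        rw [EuclideanSpace.norm_sq_eq, Fintype.sum_prod_type, Finset.sum_comm]
        simp
    _ ≤ ∑ _j : n, ‖A‖ ^ 2 := Finset.sum_le_sum fun j _ => hcol j
    _ = Fintype.card n * ‖A‖ ^ 2 := by simp

end Matrix

variable {n : ℕ}

local notation "𝕄" n => Matrix (Fin n → ZMod 2) (Fin n → ZMod 2) ℂ

lemma norm2_eq_norm_toL2 (A : 𝕄 n) : norm2 A = ‖toL2 A‖ / √(2 ^ n) := by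
  rw [norm2, ← norm_toL2_sq, Real.sqrt_div (sq_nonneg _), Real.sqrt_sq (norm_nonneg _)]

lemma abs_norm2_sub_norm2_le (A B : 𝕄 n) : |norm2 A - norm2 B| ≤ norm2 (A - B) := by
  have hpos : 0 < √(2 ^ n : ℝ) := by positivity
  simp only [norm2_eq_norm_toL2, map_sub, ← sub_div, abs_div, abs_of_pos hpos]
  gcongr
  exact abs_norm_sub_norm_le _ _

lemma norm2_smul (s : ℂ) (A : 𝕄 n) : norm2 (s • A) = ‖s‖ * norm2 A := by
  simp only [norm2_eq_norm_toL2, map_smul, norm_smul, mul_div_assoc]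

lemma norm2_le_norm (A : 𝕄 n) : norm2 A ≤ ‖A‖ := by
  have h := norm_toL2_sq_le_card_mul A
  simp only [Fintype.card_pi, Fintype.card_fin, ZMod.card, prod_const, card_univ] at h
  rw [norm2, ← norm_toL2_sq]
  refine Real.sqrt_le_iff.mpr ⟨norm_nonneg _, ?_⟩
  rw [div_le_iff₀ (by positivity)]
  push_cast at h
  linarith

lemma sum_neg_one_pow_sum_mul_val {ι : Type*} [Fintype ι] [DecidableEq ι] (c : ι → ℕ) :
    ∑ v : ι → ZMod 2, (-1 : ℂ) ^ (∑ i, c i * (v i).val) = ∏ i, (1 + (-1 : ℂ) ^ c i) := by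
  simp_rw [← Finset.prod_pow_eq_pow_sum]
  rw [← Fintype.prod_sum (fun i (a : ZMod 2) => (-1 : ℂ) ^ (c i * a.val))]
  refine Finset.prod_congr rfl fun i _ => ?_
  change ∑ j : Fin 2, (-1 : ℂ) ^ (c i * (j : ZMod 2).val) = _
  simp [Fin.sum_univ_two]

lemma pauli_zero : pauli (0 : F n) = 1 := by
  ext u v
  simp [pauli, Matrix.one_apply]

lemma trace_conjTranspose_pauli_mul_pauli (x y : F n) :
    ((pauli x)ᴴ * pauli y).trace = if x = y then 2 ^ n else 0 := by
  simp only [Matrix.trace, Matrix.diag, mul_apply, conjTranspose_apply]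
  simp only [pauli, mul_ite, mul_one, mul_zero, Finset.sum_ite_eq', Finset.mem_univ, if_true]
  by_cases h1 : y.1 = x.1
  swap
  · simp [h1, show x ≠ y from fun h => h1 (h ▸ rfl)]
  simp only [h1, if_true, star_mul', star_pow, Complex.star_def, Complex.conj_I, star_neg, star_one]
  simp_rw [mul_mul_mul_comm _ ((-1 : ℂ) ^ _), ← pow_add, ← Finset.sum_add_distrib, ← add_mul]
  rw [← Finset.mul_sum, sum_neg_one_pow_sum_mul_val]
  by_cases h2 : x.2 = y.2
  · have hxy : x = y := Prod.ext h1.symm h2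
    subst hxy
    simp [← mul_pow, ← two_mul, pow_mul]
  · obtain ⟨i, hi⟩ := Function.ne_iff.mp h2
    have hodd : (x.2 i).val + (y.2 i).val = 1 := by
      revert hi; generalize x.2 i = a; generalize y.2 i = b; revert a b; decide
    rw [Finset.prod_eq_zero (Finset.mem_univ i) (by simp [hodd]), mul_zero,
      if_neg fun h : x = y => h2 (h ▸ rfl)]

lemma trace_conjTranspose_pauli_mul (x : F n) (A : 𝕄 n) :
    ((pauli x)ᴴ * A).trace = 2 ^ n * pauliCoeff A x := by
  rw [pauliCoeff, ← mul_assoc, mul_one_div_cancel (pow_ne_zero _ two_ne_zero), one_mul]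

lemma pauliCoeff_pauli (x y : F n) : pauliCoeff (pauli y) x = if x = y then 1 else 0 := by
  rw [pauliCoeff, trace_conjTranspose_pauli_mul_pauli]
  split_ifs <;> simp

lemma pauliCoeff_one {x : F n} (hx : x ≠ 0) : pauliCoeff 1 x = 0 := by
  rw [← pauli_zero, pauliCoeff_pauli, if_neg hx]

lemma pauliCoeff_sub (A B : 𝕄 n) (x : F n) :
    pauliCoeff (A - B) x = pauliCoeff A x - pauliCoeff B x := by
  simp only [pauliCoeff, trace_sub, mul_sub]

lemma pauliCoeff_smul (s : ℂ) (A : 𝕄 n) (x : F n) :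
    pauliCoeff (s • A) x = s * pauliCoeff A x := by
  simp only [pauliCoeff, Matrix.mul_smul, trace_smul, smul_eq_mul, mul_left_comm]

lemma pauliCoeff_sum {ι : Type*} (s : Finset ι) (A : ι → 𝕄 n) (x : F n) :
    pauliCoeff (∑ i ∈ s, A i) x = ∑ i ∈ s, pauliCoeff (A i) x := by
  simp only [pauliCoeff, trace_sum, Finset.mul_sum]

variable (k : ℕ)

lemma projGt_sub (A B : 𝕄 n) : projGt k (A - B) = projGt k A - projGt k B := by
  simp only [projGt, pauliCoeff_sub, sub_smul, Finset.sum_sub_distrib]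

lemma projGt_smul (s : ℂ) (A : 𝕄 n) : projGt k (s • A) = s • projGt k A := by
  simp only [projGt, pauliCoeff_smul, Finset.smul_sum, smul_smul]

lemma projGt_one : projGt k (1 : 𝕄 n) = 0 := by
  refine Finset.sum_eq_zero fun x hx => ?_
  have hx0 : x ≠ 0 := by
    rintro rfl
    simp [wt] at hx
  rw [pauliCoeff_one hx0, zero_smul]

lemma pauliCoeff_projGt (A : 𝕄 n) {x : F n} (hx : k < wt x) :
    pauliCoeff (projGt k A) x = pauliCoeff A x := by
  simp [projGt, pauliCoeff_sum, pauliCoeff_smul, pauliCoeff_pauli, hx]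

lemma trace_conjTranspose_mul_projGt (B A : 𝕄 n) :
    (Bᴴ * projGt k A).trace =
      2 ^ n * ∑ x ∈ univ.filter (fun x : F n => k < wt x),
        pauliCoeff A x * star (pauliCoeff B x) := by
  simp only [projGt, Matrix.mul_smul, trace_sum, trace_smul, smul_eq_mul, Finset.mul_sum]
  refine Finset.sum_congr rfl fun x _ => ?_
  have hswap : (Bᴴ * pauli x).trace = star ((pauli x)ᴴ * B).trace := by
    rw [← trace_conjTranspose, conjTranspose_mul, conjTranspose_conjTranspose]
  rw [hswap, trace_conjTranspose_pauli_mul, star_mul', star_pow, star_ofNat]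
  ring

lemma norm2_projGt_le (A : 𝕄 n) : norm2 (projGt k A) ≤ norm2 A := by
  have hPP : inner ℂ (toL2 (projGt k A)) (toL2 (projGt k A)) =
      inner ℂ (toL2 A) (toL2 (projGt k A)) := by
    rw [inner_toL2, inner_toL2, trace_conjTranspose_mul_projGt, trace_conjTranspose_mul_projGt]
    refine congrArg (2 ^ n * ·) (Finset.sum_congr rfl fun x hx => ?_)
    rw [pauliCoeff_projGt k A (Finset.mem_filter.mp hx).2]
  have hP : ‖toL2 (projGt k A)‖ ≤ ‖toL2 A‖ := by
    rcases (norm_nonneg (toL2 (projGt k A))).eq_or_lt with h | h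
    · rw [← h]; exact norm_nonneg _
    refine le_of_mul_le_mul_right ?_ h
    calc ‖toL2 (projGt k A)‖ * ‖toL2 (projGt k A)‖ = ‖inner ℂ (toL2 A) (toL2 (projGt k A))‖ := by
          rw [← hPP, inner_self_eq_norm_sq_to_K]; simp [sq]
      _ ≤ ‖toL2 A‖ * ‖toL2 (projGt k A)‖ := norm_inner_le_norm _ _
  simp only [norm2_eq_norm_toL2]
  gcongr

lemma norm2_projGt_exp_sub_le {H : 𝕄 n} (hH : H.IsHermitian) (hHnorm : ‖H‖ ≤ 1) (t : ℝ) :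
    norm2 (projGt k (NormedSpace.exp ((-(Complex.I * t)) • H)) - (-(Complex.I * t)) • projGt k H)
      ≤ t ^ 2 := by
  have hsplit :
      projGt k (NormedSpace.exp ((-(Complex.I * t)) • H)) - (-(Complex.I * t)) • projGt k H
        = projGt k (NormedSpace.exp ((-(Complex.I * t)) • H) - (1 - (Complex.I * t) • H)) := by
    rw [projGt_sub, projGt_sub, projGt_one, projGt_smul]
    module
  rw [hsplit]
  exact (norm2_projGt_le k _).trans <| (norm2_le_norm _).trans <|
    (hH.isSelfAdjoint.norm_exp_sub_one_sub_le hHnorm t)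

theorem locality_testing_dichotomy_general (n k : ℕ) (ε₁ ε₂ c : ℝ)
    (hε : ε₁ < ε₂) (hc : 1 < c)
    (H : Matrix (Fin n → ZMod 2) (Fin n → ZMod 2) ℂ)
    (hH : H.IsHermitian) (hHnorm : ‖H‖ ≤ 1) :
    (norm2 (projGt k H) ≤ ε₁ →
      norm2 (projGt k (NormedSpace.exp ((-(Complex.I * ((ε₂ - ε₁) / (3 * c)))) • H)))
        ≤ (ε₂ - ε₁) * (2 * ε₁ + ε₂) / (9 * c)) ∧
    (norm2 (projGt k H) ≥ ε₂ →
      norm2 (projGt k (NormedSpace.exp ((-(Complex.I * ((ε₂ - ε₁) / (3 * c)))) • H)))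
        ≥ (ε₂ - ε₁) * (ε₁ + 2 * ε₂) / (9 * c)) := by
  set α : ℝ := (ε₂ - ε₁) / (3 * c) with hα
  have hc0 : 0 < c := by linarith
  have hα0 : 0 ≤ α := div_nonneg (sub_nonneg.2 hε.le) (by positivity)
  have hcast : ((ε₂ : ℂ) - ε₁) / (3 * c) = (α : ℂ) := by rw [hα]; push_cast; ring
  rw [hcast]
  have hclose : |norm2 (projGt k (NormedSpace.exp ((-(Complex.I * α)) • H)))
      - α * norm2 (projGt k H)| ≤ c * α ^ 2 := by
    have hscale : ‖-(Complex.I * α)‖ = α := by simp [abs_of_nonneg hα0]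
    calc _ = |norm2 (projGt k (NormedSpace.exp ((-(Complex.I * α)) • H)))
          - norm2 ((-(Complex.I * α)) • projGt k H)| := by rw [norm2_smul, hscale]
      _ ≤ α ^ 2 := (abs_norm2_sub_norm2_le _ _).trans (norm2_projGt_exp_sub_le k hH hHnorm α)
      _ ≤ c * α ^ 2 := le_mul_of_one_le_left (sq_nonneg α) hc.le
  rw [abs_le] at hclose
  constructor
  · intro hlocal
    have := mul_le_mul_of_nonneg_left hlocal hα0
    calc _ ≤ α * ε₁ + c * α ^ 2 := by linarith
      _ = (ε₂ - ε₁) * (2 * ε₁ + ε₂) / (9 * c) := by rw [hα]; field_simp; ring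
  · intro hfar
    have := mul_le_mul_of_nonneg_left hfar hα0
    calc (ε₂ - ε₁) * (ε₁ + 2 * ε₂) / (9 * c) = α * ε₂ - c * α ^ 2 := by
          rw [hα]; field_simp; ring
      _ ≤ _ := by linarith

/-- structural dichotomy for locality testing.  With
`α = (ε₂-ε₁)/(3c)`, if `‖H_{>k}‖₂ ≤ ε₁` then `‖U(α)_{>k}‖₂ ≤ (ε₂-ε₁)(2ε₁+ε₂)/(9c)`,
while if `‖H_{>k}‖₂ ≥ ε₂` then `‖U(α)_{>k}‖₂ ≥ (ε₂-ε₁)(ε₁+2ε₂)/(9c)`, where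
`U(α) = exp(-iαH)`. -/
theorem locality_testing_dichotomy (n k : ℕ) (ε₁ ε₂ c : ℝ)
    (hε₁ : 0 ≤ ε₁) (hε : ε₁ < ε₂) (hc : 1 < c)
    (htaylor : ∀ (H' : Matrix (Fin n → ZMod 2) (Fin n → ZMod 2) ℂ),
      H'.IsHermitian → ‖H'‖ ≤ 1 → ∀ t : ℝ, 0 ≤ t → t ≤ 1 / 2 →
        norm2 (NormedSpace.exp ((-(Complex.I * t)) • H') - (1 - (Complex.I * t) • H'))
          ≤ c * t ^ 2)
    (H : Matrix (Fin n → ZMod 2) (Fin n → ZMod 2) ℂ)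
    (hH : H.IsHermitian) (hHnorm : ‖H‖ ≤ 1) :
    (norm2 (projGt k H) ≤ ε₁ →
      norm2 (projGt k (NormedSpace.exp ((-(Complex.I * ((ε₂ - ε₁) / (3 * c)))) • H)))
        ≤ (ε₂ - ε₁) * (2 * ε₁ + ε₂) / (9 * c)) ∧
    (norm2 (projGt k H) ≥ ε₂ →
      norm2 (projGt k (NormedSpace.exp ((-(Complex.I * ((ε₂ - ε₁) / (3 * c)))) • H)))
        ≥ (ε₂ - ε₁) * (ε₁ + 2 * ε₂) / (9 * c)) :=
  locality_testing_dichotomy_general n k ε₁ ε₂ c hε hc H hH hHnorm
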